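/- arXiv:2210.00895 — 2 statements merged into one kernel-verified Lean document; each statement's English description precedes it below -/
import Mathlib

section
/- Let D be a convex set of probability measures on ℝ with finite first moments (i.e., λζ + (1−λ)ζ' ∈ D whenever ζ, ζ' ∈ D and λ ∈ (0,1)). Then each of the four functions Linf<, Linf≤, Linf>, Linf≥ is jointly convex on ℝ × D: for all ν, ν' ∈ D, all μ, μ' ∈ ℝ and all λ ∈ (0,1), one has (for example for Linf<) Linf<(λμ + (1−λ)μ', λν + (1−λ)ν') ≤ λ·Linf<(μ,ν) + (1−λ)·Linf<(μ',ν'), the inequality being in [0,+∞], and similarly for the other three functions. -/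
open MeasureTheory Filter Set ProbabilityTheory
open scoped ENNReal NNReal

noncomputable section

/-- Mean of a (probability) measure on ℝ. -/
def Emean (ν : Measure ℝ) : ℝ := ∫ x, x ∂ν

open Classical in
/-- Kullback–Leibler divergence `∫ ln (dζ/dν) dζ`, equal to `+∞` if `ζ` is not absolutely
continuous with respect to `ν` (or the integral is not defined). -/
def KL (ζ ν : Measure ℝ) : ℝ≥0∞ :=
  if ζ ≪ ν ∧ Integrable (fun x => Real.log ((ζ.rnDeriv ν x).toReal)) ζ
  then ENNReal.ofReal (∫ x, Real.log ((ζ.rnDeriv ν x).toReal) ∂ζ)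
  else ⊤

/-- Log-moment generating function `φ_ν`, with values in `EReal` (so that `+∞` is allowed). -/
def logMgf (ν : Measure ℝ) (l : ℝ) : EReal :=
  ENNReal.log (∫⁻ x, ENNReal.ofReal (Real.exp (l * x)) ∂ν)

/-- Fenchel–Legendre transform `φ*_ν(x) = sup_λ (λ x − φ_ν(λ))`. -/
def phiStar (ν : Measure ℝ) (x : ℝ) : EReal :=
  ⨆ l : ℝ, ((l * x : ℝ) : EReal) - logMgf ν l

/-- `Φ(ν', ν) = inf_{x ∈ [E(ν'), E(ν)]} (φ*_{ν'}(x) + φ*_ν(x))`. -/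
def Phi (ν' ν : Measure ℝ) : EReal :=
  ⨅ x ∈ Set.Icc (Emean ν') (Emean ν), (phiStar ν' x + phiStar ν x)

/-- The model `P[0,1]` of all Borel probability measures on `[0,1]` (seen as measures on ℝ). -/
def Pcc : Set (Measure ℝ) :=
  {ζ | IsProbabilityMeasure ζ ∧ ζ (Set.Icc (0:ℝ) 1)ᶜ = 0}

/-- `Linf<(x, ν) = inf {KL(ζ, ν) : ζ ∈ D, E(ζ) < x}`, with `inf ∅ = +∞`. -/
def Linflt (D : Set (Measure ℝ)) (x : ℝ) (ν : Measure ℝ) : ℝ≥0∞ :=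
  ⨅ ζ ∈ {ζ ∈ D | Emean ζ < x}, KL ζ ν

/-- `Linf≤(x, ν) = inf {KL(ζ, ν) : ζ ∈ D, E(ζ) ≤ x}`, with `inf ∅ = +∞`. -/
def Linfle (D : Set (Measure ℝ)) (x : ℝ) (ν : Measure ℝ) : ℝ≥0∞ :=
  ⨅ ζ ∈ {ζ ∈ D | Emean ζ ≤ x}, KL ζ ν

/-- `Linf>(x, ν) = inf {KL(ζ, ν) : ζ ∈ D, E(ζ) > x}`, with `inf ∅ = +∞`. -/
def Linfgt (D : Set (Measure ℝ)) (x : ℝ) (ν : Measure ℝ) : ℝ≥0∞ :=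
  ⨅ ζ ∈ {ζ ∈ D | x < Emean ζ}, KL ζ ν

/-- `Linf≥(x, ν) = inf {KL(ζ, ν) : ζ ∈ D, E(ζ) ≥ x}`, with `inf ∅ = +∞`. -/
def Linfge (D : Set (Measure ℝ)) (x : ℝ) (ν : Measure ℝ) : ℝ≥0∞ :=
  ⨅ ζ ∈ {ζ ∈ D | x ≤ Emean ζ}, KL ζ ν

/-- Closed support of a measure on ℝ. -/
def msupport (ν : Measure ℝ) : Set ℝ := {x | ∀ U ∈ nhds x, ν U ≠ 0}

/-- Lower end `m(ν)` of the closed support of `ν`. -/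
def mMin (ν : Measure ℝ) : ℝ := sInf (msupport ν)

/-- Upper end `M(ν)` of the closed support of `ν`. -/
def mMax (ν : Measure ℝ) : ℝ := sSup (msupport ν)

open InformationTheory

/-! For measures of equal mass `KL` is Mathlib's `klDiv`, the `f`-divergence of
`klFun t = t log t + 1 - t`. Against `κ = ν₁ + ν₂` the density of `μ₁ + μ₂` is
`q₁ r₁ + q₂ r₂` with `qᵢ = dνᵢ/dκ` summing to `1` and `rᵢ = dμᵢ/dνᵢ`, so convexity of `klFun`
makes `klDiv` subadditive, and with its homogeneity jointly convex. Mixing two competitors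
`ζ, ζ'` of the infima gives a competitor for the mixed mean constraint, since the mean is affine. -/

lemma ofReal_klFun_add_le {q₁ q₂ r₁ r₂ : ℝ≥0∞} (hq : q₁ + q₂ = 1)
    (h₁ : r₁ * q₁ ≠ ∞) (h₂ : r₂ * q₂ ≠ ∞) :
    ENNReal.ofReal (klFun (r₁ * q₁ + r₂ * q₂).toReal)
      ≤ q₁ * ENNReal.ofReal (klFun r₁.toReal) + q₂ * ENNReal.ofReal (klFun r₂.toReal) := by
  have hq₁ : q₁ ≠ ∞ := ne_top_of_le_ne_top ENNReal.one_ne_top (hq ▸ le_self_add)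
  have hq₂ : q₂ ≠ ∞ := ne_top_of_le_ne_top ENNReal.one_ne_top (hq ▸ le_add_self)
  have hq' : q₁.toReal + q₂.toReal = 1 := by
    rw [← ENNReal.toReal_add hq₁ hq₂, hq, ENNReal.toReal_one]
  have hconvex := convexOn_klFun.2 (mem_Ici.2 (ENNReal.toReal_nonneg (a := r₁)))
    (mem_Ici.2 (ENNReal.toReal_nonneg (a := r₂))) ENNReal.toReal_nonneg ENNReal.toReal_nonneg hq'
  have hmul (q : ℝ≥0∞) (hq_top : q ≠ ∞) (y : ℝ) :
      q * ENNReal.ofReal y = ENNReal.ofReal (q.toReal * y) := by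
    rw [ENNReal.ofReal_mul ENNReal.toReal_nonneg, ENNReal.ofReal_toReal hq_top]
  rw [hmul q₁ hq₁, hmul q₂ hq₂, ← ENNReal.ofReal_add
    (mul_nonneg ENNReal.toReal_nonneg (klFun_nonneg ENNReal.toReal_nonneg))
    (mul_nonneg ENNReal.toReal_nonneg (klFun_nonneg ENNReal.toReal_nonneg)),
    ENNReal.toReal_add h₁ h₂, ENNReal.toReal_mul, ENNReal.toReal_mul]
  refine ENNReal.ofReal_le_ofReal ?_
  simpa only [smul_eq_mul, mul_comm] using hconvex

lemma klDiv_add_le {α : Type*} [MeasurableSpace α] {μ₁ μ₂ ν₁ ν₂ : Measure α}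
    [IsFiniteMeasure μ₁] [IsFiniteMeasure μ₂] [IsFiniteMeasure ν₁] [IsFiniteMeasure ν₂] :
    klDiv (μ₁ + μ₂) (ν₁ + ν₂) ≤ klDiv μ₁ ν₁ + klDiv μ₂ ν₂ := by
  by_cases h₁ : μ₁ ≪ ν₁
  swap; · simp [h₁]
  by_cases h₂ : μ₂ ≪ ν₂
  swap; · simp [h₂]
  set κ := ν₁ + ν₂
  have hν₁ : ν₁ ≪ κ := Measure.AbsolutelyContinuous.rfl.add_right ν₂
  have hν₂ : ν₂ ≪ κ := Measure.AbsolutelyContinuous.rfl.add_right' ν₁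
  rw [klDiv_eq_lintegral_klFun_of_ac (h₁.add h₂), klDiv_eq_lintegral_klFun_of_ac h₁,
    klDiv_eq_lintegral_klFun_of_ac h₂, ← lintegral_rnDeriv_mul hν₁ (by fun_prop),
    ← lintegral_rnDeriv_mul hν₂ (by fun_prop), ← lintegral_add_left (by fun_prop)]
  refine lintegral_mono_ae ?_
  filter_upwards [Measure.rnDeriv_add' μ₁ μ₂ κ, Measure.rnDeriv_add' ν₁ ν₂ κ,
    Measure.rnDeriv_self κ, Measure.rnDeriv_mul_rnDeriv (κ := κ) h₁,
    Measure.rnDeriv_mul_rnDeriv (κ := κ) h₂, Measure.rnDeriv_lt_top μ₁ κ,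
    Measure.rnDeriv_lt_top μ₂ κ] with x hμ hν hκ hr₁ hr₂ hp₁ hp₂
  have hq : ν₁.rnDeriv κ x + ν₂.rnDeriv κ x = 1 := by rw [← Pi.add_apply, ← hν, hκ]
  rw [Pi.mul_apply] at hr₁ hr₂
  rw [← hr₁] at hp₁
  rw [← hr₂] at hp₂
  rw [hμ, Pi.add_apply, ← hr₁, ← hr₂]
  exact ofReal_klFun_add_le hq hp₁.ne hp₂.ne

-- `klDiv` adds the correction `ν.real univ - ζ.real univ` to the integral of `llr`.
lemma KL_eq_klDiv {ζ ν : Measure ℝ} (h : ζ univ = ν univ) : KL ζ ν = klDiv ζ ν := by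
  rw [KL, klDiv_def, Measure.real, Measure.real, h, add_sub_cancel_right, llr_def]

lemma KL_smul_add_smul_le {ζ ζ' ν ν' : Measure ℝ} [IsFiniteMeasure ζ] [IsFiniteMeasure ζ']
    [IsFiniteMeasure ν] [IsFiniteMeasure ν'] (h : ζ univ = ν univ) (h' : ζ' univ = ν' univ)
    (a b : ℝ≥0) :
    KL ((a : ℝ≥0∞) • ζ + (b : ℝ≥0∞) • ζ') ((a : ℝ≥0∞) • ν + (b : ℝ≥0∞) • ν')
      ≤ a * KL ζ ν + b * KL ζ' ν' := by
  rw [KL_eq_klDiv h, KL_eq_klDiv h', KL_eq_klDiv (by simp [h, h'])]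
  simp only [← ENNReal.smul_def]
  calc klDiv (a • ζ + b • ζ') (a • ν + b • ν') ≤ klDiv (a • ζ) (a • ν) + klDiv (b • ζ') (b • ν') :=
        klDiv_add_le
    _ = a * klDiv ζ ν + b * klDiv ζ' ν' := by rw [klDiv_smul_same, klDiv_smul_same]

lemma Emean_smul_add_smul {ζ ζ' : Measure ℝ} (hζ : Integrable (fun x => x) ζ)
    (hζ' : Integrable (fun x => x) ζ') (a b : ℝ≥0) :
    Emean ((a : ℝ≥0∞) • ζ + (b : ℝ≥0∞) • ζ') = a * Emean ζ + b * Emean ζ' := by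
  rw [Emean, integral_add_measure (hζ.smul_measure ENNReal.coe_ne_top)
    (hζ'.smul_measure ENNReal.coe_ne_top), integral_smul_measure, integral_smul_measure]
  simp [Emean]

lemma le_mul_biInf_add_mul_biInf {α β : Type*} {S : Set α} {T : Set β} {f : α → ℝ≥0∞}
    {g : β → ℝ≥0∞} {a b c : ℝ≥0∞} (ha₀ : a ≠ 0) (ha : a ≠ ∞) (hb₀ : b ≠ 0) (hb : b ≠ ∞)
    (h : ∀ i ∈ S, ∀ j ∈ T, c ≤ a * f i + b * g j) :
    c ≤ a * (⨅ i ∈ S, f i) + b * ⨅ j ∈ T, g j := by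
  simp only [ENNReal.mul_iInf_of_ne ha₀ ha, ENNReal.mul_iInf_of_ne hb₀ hb, ENNReal.add_iInf,
    ENNReal.iInf_add]
  exact le_iInf₂ fun j hj => le_iInf₂ fun i hi => h i hi j hj

lemma biInf_KL_mix_le {D : Set (Measure ℝ)}
    (hD : ∀ ζ ∈ D, IsProbabilityMeasure ζ ∧ Integrable (fun x => x) ζ)
    (hconv : ∀ ζ ∈ D, ∀ ζ' ∈ D, ∀ l ∈ Set.Ioo (0:ℝ) 1,
      (ENNReal.ofReal l • ζ + ENNReal.ofReal (1 - l) • ζ' : Measure ℝ) ∈ D)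
    {ν ν' : Measure ℝ} (hν : ν ∈ D) (hν' : ν' ∈ D) {l : ℝ} (hl : l ∈ Set.Ioo (0:ℝ) 1)
    {p p' q : ℝ → Prop} (hpq : ∀ s t, p s → p' t → q (l * s + (1 - l) * t)) :
    ⨅ ζ ∈ {ζ ∈ D | q (Emean ζ)}, KL ζ (ENNReal.ofReal l • ν + ENNReal.ofReal (1 - l) • ν')
      ≤ ENNReal.ofReal l * (⨅ ζ ∈ {ζ ∈ D | p (Emean ζ)}, KL ζ ν)
        + ENNReal.ofReal (1 - l) * ⨅ ζ ∈ {ζ ∈ D | p' (Emean ζ)}, KL ζ ν' := by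
  have hl₀ : 0 < l := hl.1
  have hl₁ : 0 < 1 - l := sub_pos.2 hl.2
  have := (hD ν hν).1
  have := (hD ν' hν').1
  refine le_mul_biInf_add_mul_biInf (by simpa using hl₀) ENNReal.ofReal_ne_top
    (by simpa using hl₁) ENNReal.ofReal_ne_top ?_
  rintro ζ ⟨hζD, hζ⟩ ζ' ⟨hζ'D, hζ'⟩
  have := (hD ζ hζD).1
  have := (hD ζ' hζ'D).1
  have hmean : q (Emean (ENNReal.ofReal l • ζ + ENNReal.ofReal (1 - l) • ζ')) := by
    rw [ENNReal.ofReal, ENNReal.ofReal, Emean_smul_add_smul (hD ζ hζD).2 (hD ζ' hζ'D).2,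
      Real.coe_toNNReal _ hl₀.le, Real.coe_toNNReal _ hl₁.le]
    exact hpq _ _ hζ hζ'
  exact (iInf₂_le _ ⟨hconv ζ hζD ζ' hζ'D l hl, hmean⟩).trans
    (KL_smul_add_smul_le (by simp) (by simp) _ _)

/-- Joint convexity of `Linf<`, `Linf≤`, `Linf>`, `Linf≥` on `ℝ × D` for a convex model `D`
of probability measures on ℝ with finite first moments. -/
theorem Linf_jointly_convex (D : Set (Measure ℝ))
    (hD : ∀ ζ ∈ D, IsProbabilityMeasure ζ ∧ Integrable (fun x => x) ζ)
    (hconv : ∀ ζ ∈ D, ∀ ζ' ∈ D, ∀ l ∈ Set.Ioo (0:ℝ) 1,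
      (ENNReal.ofReal l • ζ + ENNReal.ofReal (1 - l) • ζ' : Measure ℝ) ∈ D) :
    ∀ ν ∈ D, ∀ ν' ∈ D, ∀ μ μ' : ℝ, ∀ l ∈ Set.Ioo (0:ℝ) 1,
      (Linflt D (l * μ + (1 - l) * μ') (ENNReal.ofReal l • ν + ENNReal.ofReal (1 - l) • ν')
          ≤ ENNReal.ofReal l * Linflt D μ ν + ENNReal.ofReal (1 - l) * Linflt D μ' ν') ∧
      (Linfle D (l * μ + (1 - l) * μ') (ENNReal.ofReal l • ν + ENNReal.ofReal (1 - l) • ν')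
          ≤ ENNReal.ofReal l * Linfle D μ ν + ENNReal.ofReal (1 - l) * Linfle D μ' ν') ∧
      (Linfgt D (l * μ + (1 - l) * μ') (ENNReal.ofReal l • ν + ENNReal.ofReal (1 - l) • ν')
          ≤ ENNReal.ofReal l * Linfgt D μ ν + ENNReal.ofReal (1 - l) * Linfgt D μ' ν') ∧
      (Linfge D (l * μ + (1 - l) * μ') (ENNReal.ofReal l • ν + ENNReal.ofReal (1 - l) • ν')
          ≤ ENNReal.ofReal l * Linfge D μ ν + ENNReal.ofReal (1 - l) * Linfge D μ' ν') := by
  intro ν hν ν' hν' μ μ' l hl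
  have hl₀ := hl.1
  have hl₁ : 0 < 1 - l := sub_pos.2 hl.2
  exact ⟨biInf_KL_mix_le hD hconv hν hν' hl (p := (· < μ)) (p' := (· < μ'))
      (q := (· < l * μ + (1 - l) * μ'))
      fun s t hs ht => by nlinarith,
    biInf_KL_mix_le hD hconv hν hν' hl (p := (· ≤ μ)) (p' := (· ≤ μ'))
      (q := (· ≤ l * μ + (1 - l) * μ'))
      fun s t hs ht => by nlinarith,
    biInf_KL_mix_le hD hconv hν hν' hl (p := (μ < ·)) (p' := (μ' < ·))
      (q := (l * μ + (1 - l) * μ' < ·))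
      fun s t hs ht => by nlinarith,
    biInf_KL_mix_le hD hconv hν hν' hl (p := (μ ≤ ·)) (p' := (μ' ≤ ·))
      (q := (l * μ + (1 - l) * μ' ≤ ·))
      fun s t hs ht => by nlinarith⟩

end
end

section
/- Let D be a set of probability measures ν on ℝ such that ∫ e^{λx} dν(x) < ∞ for all λ ∈ ℝ and all ν ∈ D. Assume D is stable by exponential reweighting: for all ν ∈ D and λ ∈ ℝ, the measure ν_λ with density dν_λ/dν(x) = e^{λx} / ∫ e^{λy} dν(y) also belongs to D. Assume further that whenever ν ∈ D has a finite lower or upper support end x ∈ {m(ν), M(ν)} with ν({x}) > 0, the Dirac mass δ_x belongs to D. Then for every ν ∈ D: φ*_ν(x) = Linf≤(x,ν) for all x ≤ E(ν), and φ*_ν(x) = Linf≥(x,ν) for all x ≥ E(ν). -/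
open MeasureTheory Filter Set ProbabilityTheory
open scoped ENNReal NNReal

noncomputable section

/-- The exponentially tilted measure `ν_λ`, with density
`x ↦ e^{λx} / ∫ e^{λy} dν(y)` with respect to `ν`. -/
def tiltM (ν : Measure ℝ) (l : ℝ) : Measure ℝ :=
  ν.withDensity (fun x => ENNReal.ofReal (Real.exp (l * x) / ∫ y, Real.exp (l * y) ∂ν))

/-!
If `x = E(ν_λ)` for some `λ`, the tilted measure `ν_λ ∈ D` has
`KL(ν_λ, ν) = λ x - φ_ν(λ) ≤ φ*_ν(x)`. Otherwise, since `λ ↦ E(ν_λ) = φ_ν'(λ)` is continuous,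
`x` lies strictly on one side of all tilted means; tilting hard towards the other side would
move the mean past `x`, so `ν` puts no mass there. Then `∫ e^{λ(y - x)} dν → ν{x}` as `λ`
runs off to infinity in that direction, whence `φ*_ν(x) ≥ -ln ν{x}`: this is `+∞` if `x` is not
an atom, and otherwise `x` is an end of the support, `δ_x ∈ D`, and `-ln ν{x} = KL(δ_x, ν)`.
So the infimum over `{ζ ∈ D | E(ζ) = x}` is at most `φ*_ν(x)`.

Conversely, `λ E(ζ) - φ_ν(λ) ≤ KL(ζ, ν)` (Donsker–Varadhan) and `λ E(ν) ≤ φ_ν(λ)` (Jensen)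
bound `λ x - φ_ν(λ)` by `KL(ζ, ν)` whenever `x` lies between `E(ζ)` and `E(ν)`.
-/

open Real Topology

section

variable {ν ζ : Measure ℝ} {l s x : ℝ}

lemma interior_integrableExpSet_id (hexp : ∀ l, Integrable (fun y => exp (l * y)) ν) :
    interior (integrableExpSet id ν) = univ := by
  rw [show integrableExpSet id ν = univ from eq_univ_of_forall hexp, interior_univ]

lemma mem_interior_integrableExpSet_id (hexp : ∀ l, Integrable (fun y => exp (l * y)) ν)
    (l : ℝ) : l ∈ interior (integrableExpSet id ν) :=
  (interior_integrableExpSet_id hexp).symm ▸ mem_univ l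

lemma integrable_id_of_integrable_exp (hexp : ∀ l, Integrable (fun y => exp (l * y)) ν) :
    Integrable id ν :=
  integrable_of_mem_interior_integrableExpSet (mem_interior_integrableExpSet_id hexp 0)

lemma integrable_mul_exp_mul (hexp : ∀ l, Integrable (fun y => exp (l * y)) ν) (l : ℝ) :
    Integrable (fun y => y * exp (l * y)) ν := by
  simpa using integrable_pow_mul_exp_of_mem_interior_integrableExpSet (X := id)
    (mem_interior_integrableExpSet_id hexp l) 1

lemma logMgf_eq_cgf [NeZero ν] (hl : Integrable (fun y => exp (l * y)) ν) :
    logMgf ν l = cgf id ν l := by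
  rw [logMgf, ← ofReal_integral_eq_lintegral_ofReal hl (ae_of_all _ fun y => (exp_pos _).le),
    ENNReal.log_ofReal_of_pos (integral_exp_pos hl)]
  rfl

lemma phiStar_eq_iSup_cgf [NeZero ν] (hexp : ∀ l, Integrable (fun y => exp (l * y)) ν) (x : ℝ) :
    phiStar ν x = ⨆ l : ℝ, ((l * x - cgf id ν l : ℝ) : EReal) := by
  simp only [phiStar, logMgf_eq_cgf (hexp _), EReal.coe_sub]

lemma Emean_tiltM (hexp : ∀ l, Integrable (fun y => exp (l * y)) ν) (l : ℝ) :
    Emean (tiltM ν l) = deriv (cgf id ν) l :=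
  integral_tilted_mul_self (mem_interior_integrableExpSet_id hexp l)

lemma continuous_Emean_tiltM (hexp : ∀ l, Integrable (fun y => exp (l * y)) ν) :
    Continuous fun l => Emean (tiltM ν l) := by
  have h := (analyticOnNhd_cgf (X := id) (μ := ν)).deriv.continuousOn
  rw [interior_integrableExpSet_id hexp] at h
  simpa only [Emean_tiltM hexp] using continuousOn_univ.mp h

lemma integral_llr_nonneg [IsProbabilityMeasure ζ] [IsProbabilityMeasure ν] (hac : ζ ≪ ν)
    (hllr : Integrable (llr ζ ν) ζ) : 0 ≤ ∫ y, llr ζ ν y ∂ζ := by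
  simpa using InformationTheory.integral_llr_add_sub_measure_univ_nonneg hac hllr

lemma coe_KL_eq_integral_llr [IsProbabilityMeasure ζ] [IsProbabilityMeasure ν]
    (hac : ζ ≪ ν) (hllr : Integrable (llr ζ ν) ζ) :
    (KL ζ ν : EReal) = ∫ y, llr ζ ν y ∂ζ := by
  rw [KL, if_pos ⟨hac, hllr⟩, ← llr_def, EReal.coe_ennreal_ofReal,
    max_eq_left (integral_llr_nonneg hac hllr)]

/-- The Donsker–Varadhan inequality: `KL(ζ, ν) - (λ E(ζ) - φ_ν(λ)) = KL(ζ, ν_λ) ≥ 0`. -/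
lemma mul_Emean_sub_cgf_le_integral_llr [IsProbabilityMeasure ζ] [IsProbabilityMeasure ν]
    (hac : ζ ≪ ν) (hllr : Integrable (llr ζ ν) ζ) (hid : Integrable id ζ)
    (hl : Integrable (fun y => exp (l * y)) ν) :
    l * Emean ζ - cgf id ν l ≤ ∫ y, llr ζ ν y ∂ζ := by
  have : IsProbabilityMeasure (ν.tilted (l * id ·)) := isProbabilityMeasure_tilted hl
  have hac' : ζ ≪ ν.tilted (l * id ·) := hac.trans (absolutelyContinuous_tilted hl)
  have hnonneg := integral_llr_nonneg hac'
    (integrable_llr_tilted_right hac (hid.const_mul l) hllr hl)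
  rw [integral_llr_tilted_right hac (hid.const_mul l) hl hllr, integral_const_mul] at hnonneg
  simp only [cgf, mgf, Emean, id] at hnonneg ⊢
  linarith

lemma mul_Emean_le_cgf [IsProbabilityMeasure ν] (hid : Integrable id ν)
    (hl : Integrable (fun y => exp (l * y)) ν) :
    l * Emean ν ≤ cgf id ν l := by
  have hllr : ∫ y, llr ν ν y ∂ν = 0 := by simp [integral_congr_ae (llr_self ν)]
  have := mul_Emean_sub_cgf_le_integral_llr .rfl
    ((integrable_zero _ _ _).congr (llr_self ν).symm) hid hl
  linarith

lemma phiStar_le_KL [IsProbabilityMeasure ζ] [IsProbabilityMeasure ν] (hid : Integrable id ζ)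
    (hexp : ∀ l, Integrable (fun y => exp (l * y)) ν) (hx : x ∈ uIcc (Emean ζ) (Emean ν)) :
    phiStar ν x ≤ KL ζ ν := by
  by_cases hKL : KL ζ ν = ⊤
  · simp [hKL]
  obtain ⟨hac, hllr⟩ : ζ ≪ ν ∧ Integrable (llr ζ ν) ζ := by
    by_contra hc
    exact hKL (if_neg hc)
  rw [coe_KL_eq_integral_llr hac hllr, phiStar_eq_iSup_cgf hexp]
  refine iSup_le fun l => EReal.coe_le_coe_iff.2 ?_
  have hζ := mul_Emean_sub_cgf_le_integral_llr hac hllr hid (hexp l)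
  have hν := mul_Emean_le_cgf (integrable_id_of_integrable_exp hexp) (hexp l)
  have h0 := integral_llr_nonneg hac hllr
  have hmax : l * x ≤ l * Emean ζ ∨ l * x ≤ l * Emean ν := by
    rcases mem_uIcc.1 hx with ⟨h1, h2⟩ | ⟨h1, h2⟩ <;> rcases le_total 0 l with hl | hl
    all_goals first
      | exact .inl (by nlinarith) | exact .inr (by nlinarith)
  rcases hmax with h | h <;> linarith

lemma coe_KL_tiltM [IsProbabilityMeasure ν] (hexp : ∀ l, Integrable (fun y => exp (l * y)) ν)
    (l : ℝ) : (KL (tiltM ν l) ν : EReal) = ((l * Emean (tiltM ν l) - cgf id ν l : ℝ) : EReal) := by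
  have : IsProbabilityMeasure (tiltM ν l) := isProbabilityMeasure_tilted (hexp l)
  have hlin : Integrable (fun y => l * y) (tiltM ν l) :=
    ((memLp_tilted_mul (mem_interior_integrableExpSet_id hexp l) 1).integrable le_rfl).const_mul l
  have hac : tiltM ν l ≪ ν := tilted_absolutelyContinuous ν _
  have hllr : llr (tiltM ν l) ν =ᵐ[tiltM ν l] fun y => l * y - cgf id ν l :=
    hac.ae_le (log_rnDeriv_tilted_left_self (hexp l))
  rw [coe_KL_eq_integral_llr hac ((hlin.sub (integrable_const _)).congr hllr.symm),
    integral_congr_ae hllr, integral_sub hlin (integrable_const _), integral_const,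
    integral_const_mul]
  simp [Emean]

lemma KL_tiltM_le_phiStar [IsProbabilityMeasure ν]
    (hexp : ∀ l, Integrable (fun y => exp (l * y)) ν) (l : ℝ) :
    (KL (tiltM ν l) ν : EReal) ≤ phiStar ν (Emean (tiltM ν l)) := by
  rw [coe_KL_tiltM hexp, phiStar_eq_iSup_cgf hexp]
  exact le_iSup (fun l' : ℝ => ((l' * Emean (tiltM ν l) - cgf id ν l' : ℝ) : EReal)) l

lemma exists_pos_measure_le_neg {u : ℝ → ℝ} (h : ν {y | u y < 0} ≠ 0) :
    ∃ ε > 0, ν {y | u y ≤ -ε} ≠ 0 := by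
  by_contra! hc
  refine h (measure_mono_null (fun y (hy : u y < 0) => ?_) (measure_iUnion_null fun n : ℕ =>
    hc (1 / (n + 1)) Nat.one_div_pos_of_nat))
  obtain ⟨n, hn⟩ := exists_nat_one_div_lt (neg_pos.2 hy)
  exact mem_iUnion.2 ⟨n, show u y ≤ -(1 / (n + 1)) by linarith⟩

lemma exists_integral_mul_exp_neg_mul_nonpos [IsFiniteMeasure ν] {u : ℝ → ℝ} (hu : Measurable u)
    (hint : ∀ t, Integrable (fun y => u y * exp (-(t * u y))) ν) (h : ν {y | u y < 0} ≠ 0) :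
    ∃ t, ∫ y, u y * exp (-(t * u y)) ∂ν ≤ 0 := by
  obtain ⟨ε, hε, hA⟩ := exists_pos_measure_le_neg h
  set A := {y | u y ≤ -ε}
  have hA_meas : MeasurableSet A := hu measurableSet_Iic
  have hp : 0 < ν.real A := ENNReal.toReal_pos hA (measure_ne_top _ _)
  have hpos : Integrable (fun y => max (u y) 0) ν := by
    simpa using (hint 0).pos_part
  set C := ∫ y, max (u y) 0 ∂ν
  have hC : 0 ≤ C := integral_nonneg fun y => le_max_right _ _
  -- with this `t`, `ε * (t * ε) * ν(A) = C ≤ ε * exp (t * ε) * ν(A)`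
  set t := C / (ε ^ 2 * ν.real A)
  have ht : 0 ≤ t := by positivity
  have hbound : ∀ y,
      u y * exp (-(t * u y)) ≤ max (u y) 0 - A.indicator (fun _ => ε * exp (t * ε)) y := by
    intro y
    by_cases hy : u y ≤ -ε
    · have : exp (t * ε) ≤ exp (-(t * u y)) := exp_le_exp.2 (by nlinarith)
      rw [indicator_of_mem (show y ∈ A from hy), max_eq_right (by linarith)]
      nlinarith [exp_pos (t * ε)]
    · rw [indicator_of_notMem (show y ∉ A from hy), sub_zero]
      rcases le_total 0 (u y) with hu0 | hu0
      · rw [max_eq_left hu0]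
        exact mul_le_of_le_one_right hu0 (exp_le_one_iff.2 (by nlinarith))
      · exact (mul_nonpos_of_nonpos_of_nonneg hu0 (exp_pos _).le).trans (le_max_right _ _)
  refine ⟨t, (integral_mono (hint t) (hpos.sub ((integrable_const _).indicator hA_meas))
    hbound).trans ?_⟩
  rw [Pi.sub_def, integral_sub hpos ((integrable_const _).indicator hA_meas),
    integral_indicator_const _ hA_meas, smul_eq_mul]
  have hCt : C = t * ε * (ε * ν.real A) := by
    simp only [t]; field_simp
  nlinarith [add_one_le_exp (t * ε), mul_pos hε hp]

lemma exists_mul_Emean_tiltM_sub_nonpos [IsProbabilityMeasure ν]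
    (hexp : ∀ l, Integrable (fun y => exp (l * y)) ν) (s : ℝ)
    (h : ν {y | s * (y - x) < 0} ≠ 0) : ∃ l, s * (Emean (tiltM ν l) - x) ≤ 0 := by
  have hfactor : ∀ t y, s * (y - x) * exp (-(t * (s * (y - x))))
      = exp (t * s * x) * (s * (y * exp (-(t * s) * y) - x * exp (-(t * s) * y))) := by
    intro t y
    rw [show -(t * (s * (y - x))) = t * s * x + -(t * s) * y by ring, exp_add]
    ring
  have hint : ∀ t, Integrable (fun y => s * (y - x) * exp (-(t * (s * (y - x))))) ν := fun t => by
    simp_rw [hfactor t]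
    exact (((integrable_mul_exp_mul hexp _).sub ((hexp _).const_mul x)).const_mul s).const_mul _
  obtain ⟨t, ht⟩ := exists_integral_mul_exp_neg_mul_nonpos (by fun_prop) hint h
  refine ⟨-(t * s), ?_⟩
  have hmgf : 0 < mgf id ν (-(t * s)) := mgf_pos (hexp _)
  simp_rw [hfactor t] at ht
  rw [integral_const_mul, integral_const_mul, integral_sub (integrable_mul_exp_mul hexp _)
    ((hexp _).const_mul x), integral_const_mul] at ht
  rw [Emean_tiltM hexp, deriv_cgf (mem_interior_integrableExpSet_id hexp _)]
  change s * ((∫ y, y * exp (-(t * s) * y) ∂ν) / mgf id ν (-(t * s)) - x) ≤ 0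
  have hsign : s * ((∫ y, y * exp (-(t * s) * y) ∂ν) - x * mgf id ν (-(t * s))) ≤ 0 :=
    nonpos_of_mul_nonpos_right ht (exp_pos _)
  rw [div_sub' hmgf.ne', mul_div_assoc']
  exact div_nonpos_of_nonpos_of_nonneg (by linarith) hmgf.le

lemma exists_Emean_tiltM_eq_or_ae_nonneg [IsProbabilityMeasure ν]
    (hexp : ∀ l, Integrable (fun y => exp (l * y)) ν) (x : ℝ) :
    (∃ l, Emean (tiltM ν l) = x) ∨ ∃ s ≠ 0, ∀ᵐ y ∂ν, 0 ≤ s * (y - x) := by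
  refine or_iff_not_imp_left.2 fun hx => ?_
  have hside : (∀ l, x < Emean (tiltM ν l)) ∨ ∀ l, Emean (tiltM ν l) < x := by
    by_contra! hc
    obtain ⟨⟨l₁, h₁⟩, l₂, h₂⟩ := hc
    exact hx (intermediate_value_univ l₁ l₂ (continuous_Emean_tiltM hexp) ⟨h₁, h₂⟩)
  obtain ⟨s, hs, hpos⟩ : ∃ s : ℝ, s ≠ 0 ∧ ∀ l, 0 < s * (Emean (tiltM ν l) - x) := by
    rcases hside with h | h
    · exact ⟨1, one_ne_zero, fun l => by linarith [h l]⟩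
    · exact ⟨-1, by norm_num, fun l => by linarith [h l]⟩
  refine ⟨s, hs, ae_iff.2 (not_not.1 fun hne => ?_)⟩
  obtain ⟨l, hl⟩ := exists_mul_Emean_tiltM_sub_nonpos hexp s (by simpa only [not_le] using hne)
  exact (hpos l).not_ge hl

lemma coe_mul_sub_logMgf (ν : Measure ℝ) (l x : ℝ) :
    ((l * x : ℝ) : EReal) - logMgf ν l
      = -ENNReal.log (∫⁻ y, ENNReal.ofReal (exp (l * (y - x))) ∂ν) := by
  have hsplit : ∫⁻ y, ENNReal.ofReal (exp (l * y)) ∂ν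
      = ENNReal.ofReal (exp (l * x)) * ∫⁻ y, ENNReal.ofReal (exp (l * (y - x))) ∂ν := by
    rw [← lintegral_const_mul _ (by fun_prop)]
    congr with y
    rw [← ENNReal.ofReal_mul (exp_pos _).le, ← exp_add]
    ring_nf
  rw [logMgf, hsplit, ENNReal.log_mul_add, ENNReal.log_ofReal_of_pos (exp_pos _), log_exp,
    EReal.sub_add_cancel_left]

lemma tendsto_lintegral_exp_neg_mul [IsFiniteMeasure ν] (hs : s ≠ 0)
    (hae : ∀ᵐ y ∂ν, 0 ≤ s * (y - x)) :
    Tendsto (fun n : ℕ => ∫⁻ y, ENNReal.ofReal (exp (-(n * s) * (y - x))) ∂ν) atTop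
      (𝓝 (ν {x})) := by
  rw [← lintegral_indicator_one (measurableSet_singleton x)]
  refine tendsto_lintegral_of_dominated_convergence (fun _ => 1) (fun n => by fun_prop)
    (fun n => ?_) (by simp) ?_
  · filter_upwards [hae] with y hy
    refine ENNReal.ofReal_le_one.2 (exp_le_one_iff.2 ?_)
    nlinarith [(n.cast_nonneg : (0 : ℝ) ≤ n)]
  · filter_upwards [hae] with y hy
    rcases eq_or_ne y x with rfl | hyx
    · simp
    have hpos : 0 < s * (y - x) := hy.lt_of_ne' (mul_ne_zero hs (sub_ne_zero.2 hyx))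
    rw [indicator_of_notMem (by simpa using hyx), ← ENNReal.ofReal_zero]
    refine ENNReal.tendsto_ofReal (tendsto_exp_atBot.comp ?_)
    simp_rw [neg_mul, mul_assoc]
    exact tendsto_neg_atTop_atBot.comp
      (tendsto_natCast_atTop_atTop.atTop_mul_const hpos)

lemma neg_log_measure_singleton_le_phiStar [IsFiniteMeasure ν] (hs : s ≠ 0)
    (hae : ∀ᵐ y ∂ν, 0 ≤ s * (y - x)) :
    -ENNReal.log (ν {x}) ≤ phiStar ν x := by
  refine le_of_tendsto' ((continuous_neg.tendsto _).comp
    ((ENNReal.continuous_log.tendsto _).comp (tendsto_lintegral_exp_neg_mul hs hae))) fun n => ?_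
  simp only [Function.comp_apply, ← coe_mul_sub_logMgf]
  exact le_iSup (fun l : ℝ => ((l * x : ℝ) : EReal) - logMgf ν l) _

lemma mem_msupport_of_measure_singleton_ne_zero (hx : ν {x} ≠ 0) : x ∈ msupport ν :=
  fun _ hU h0 => hx (measure_mono_null (singleton_subset_iff.2 (mem_of_mem_nhds hU)) h0)

lemma isLeast_msupport (hae : ∀ᵐ y ∂ν, x ≤ y) (hx : ν {x} ≠ 0) : IsLeast (msupport ν) x := by
  rw [ae_iff] at hae
  refine ⟨mem_msupport_of_measure_singleton_ne_zero hx, fun y hy => not_lt.1 fun hyx => ?_⟩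
  exact hy (Iio x) (Iio_mem_nhds hyx) (by simpa only [not_le] using hae : ν {a | a < x} = 0)

lemma isGreatest_msupport (hae : ∀ᵐ y ∂ν, y ≤ x) (hx : ν {x} ≠ 0) :
    IsGreatest (msupport ν) x := by
  rw [ae_iff] at hae
  refine ⟨mem_msupport_of_measure_singleton_ne_zero hx, fun y hy => not_lt.1 fun hxy => ?_⟩
  exact hy (Ioi x) (Ioi_mem_nhds hxy) (by simpa only [not_le] using hae : ν {a | x < a} = 0)

lemma isLeast_or_isGreatest_msupport (hs : s ≠ 0) (hae : ∀ᵐ y ∂ν, 0 ≤ s * (y - x))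
    (hx : ν {x} ≠ 0) : IsLeast (msupport ν) x ∨ IsGreatest (msupport ν) x := by
  rcases hs.lt_or_gt with hs | hs
  · exact .inr (isGreatest_msupport (hae.mono fun y hy => by nlinarith) hx)
  · exact .inl (isLeast_msupport (hae.mono fun y hy => by nlinarith) hx)

lemma dirac_absolutelyContinuous (hx : ν {x} ≠ 0) : Measure.dirac x ≪ ν := fun t ht => by
  rw [Measure.dirac_apply, indicator_of_notMem fun hxt =>
    hx (measure_mono_null (singleton_subset_iff.2 hxt) ht)]

lemma rnDeriv_dirac_self [SigmaFinite ν] (hx : ν {x} ≠ 0) :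
    (Measure.dirac x).rnDeriv ν x = (ν {x})⁻¹ := by
  have h := Measure.setLIntegral_rnDeriv (dirac_absolutelyContinuous hx) {x}
  rw [lintegral_singleton, Measure.dirac_apply_of_mem (mem_singleton x)] at h
  exact ENNReal.eq_inv_of_mul_eq_one_left h

lemma coe_KL_dirac [IsProbabilityMeasure ν] (hx : ν {x} ≠ 0) :
    (KL (Measure.dirac x) ν : EReal) = -ENNReal.log (ν {x}) := by
  rw [coe_KL_eq_integral_llr (dirac_absolutelyContinuous hx) (integrable_dirac (by simp)),
    integral_dirac, llr, rnDeriv_dirac_self hx, ENNReal.toReal_inv, Real.log_inv,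
    ENNReal.log_pos_real hx (measure_ne_top _ _), EReal.coe_neg]

lemma le_coe_ennreal_biInf {α : Type*} {a : EReal} {S : Set α} {f : α → ℝ≥0∞}
    (h : ∀ i ∈ S, a ≤ f i) : a ≤ ((⨅ i ∈ S, f i : ℝ≥0∞) : EReal) := by
  rcases le_total a 0 with ha | ha
  · exact ha.trans (EReal.coe_ennreal_nonneg _)
  rw [← EReal.coe_toENNReal ha, EReal.coe_ennreal_le_coe_ennreal_iff]
  refine le_iInf₂ fun i hi => ?_
  rw [← EReal.coe_ennreal_le_coe_ennreal_iff, EReal.coe_toENNReal ha]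
  exact h i hi

lemma iInf_KL_le_phiStar {D : Set (Measure ℝ)} [IsProbabilityMeasure ν]
    (hexp : ∀ l, Integrable (fun y => exp (l * y)) ν) (htilt : ∀ l, tiltM ν l ∈ D)
    (hdirac : ∀ x, IsLeast (msupport ν) x ∨ IsGreatest (msupport ν) x → ν {x} ≠ 0 →
      Measure.dirac x ∈ D) (x : ℝ) :
    ((⨅ ζ ∈ {ζ ∈ D | Emean ζ = x}, KL ζ ν : ℝ≥0∞) : EReal) ≤ phiStar ν x := by
  rcases exists_Emean_tiltM_eq_or_ae_nonneg hexp x with ⟨l, rfl⟩ | ⟨s, hs, hae⟩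
  · exact (EReal.coe_ennreal_le_coe_ennreal_iff.2 (iInf₂_le _ ⟨htilt l, rfl⟩)).trans
      (KL_tiltM_le_phiStar hexp l)
  have hlog := neg_log_measure_singleton_le_phiStar hs hae
  by_cases hx : ν {x} = 0
  · rw [hx, ENNReal.log_zero, EReal.neg_bot, top_le_iff] at hlog
    exact hlog ▸ le_top
  calc ((⨅ ζ ∈ {ζ ∈ D | Emean ζ = x}, KL ζ ν : ℝ≥0∞) : EReal)
      ≤ KL (Measure.dirac x) ν := EReal.coe_ennreal_le_coe_ennreal_iff.2 (iInf₂_le _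
        ⟨hdirac x (isLeast_or_isGreatest_msupport hs hae hx) hx, integral_dirac (fun y => y) x⟩)
    _ = -ENNReal.log (ν {x}) := coe_KL_dirac hx
    _ ≤ phiStar ν x := hlog

end

/-- Let `D` be a set of probability measures on ℝ with all exponential moments finite,
stable by exponential reweighting, and containing the Dirac mass at every finite support end
which is an atom of some of its members. Then for every `ν ∈ D`:
`φ*_ν(x) = Linf≤(x,ν)` for all `x ≤ E(ν)`, and `φ*_ν(x) = Linf≥(x,ν)` for all `x ≥ E(ν)`. -/
theorem phiStar_eq_Linf_of_stable (D : Set (Measure ℝ))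
    (hprob : ∀ ν ∈ D, IsProbabilityMeasure ν)
    (hexp : ∀ ν ∈ D, ∀ l : ℝ, Integrable (fun x => Real.exp (l * x)) ν)
    (htilt : ∀ ν ∈ D, ∀ l : ℝ, tiltM ν l ∈ D)
    (hdirac : ∀ ν ∈ D, ∀ x : ℝ,
      ((BddBelow (msupport ν) ∧ x = sInf (msupport ν)) ∨
        (BddAbove (msupport ν) ∧ x = sSup (msupport ν))) →
      ν {x} ≠ 0 → Measure.dirac x ∈ D) :
    ∀ ν ∈ D,
      (∀ x : ℝ, x ≤ Emean ν → phiStar ν x = (Linfle D x ν : EReal)) ∧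
      (∀ x : ℝ, Emean ν ≤ x → phiStar ν x = (Linfge D x ν : EReal)) := by
  intro ν hν
  have := hprob ν hν
  have hKL : ∀ ζ ∈ D, ∀ x ∈ uIcc (Emean ζ) (Emean ν), phiStar ν x ≤ KL ζ ν := fun ζ hζ x hx =>
    have := hprob ζ hζ
    phiStar_le_KL (integrable_id_of_integrable_exp (hexp ζ hζ)) (hexp ν hν) hx
  have hattained := iInf_KL_le_phiStar (hexp ν hν) (htilt ν hν) fun x hx =>
    hdirac ν hν x (hx.imp (fun h => ⟨h.bddBelow, h.csInf_eq.symm⟩)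
      fun h => ⟨h.bddAbove, h.csSup_eq.symm⟩)
  refine ⟨fun x hx => le_antisymm ?_ ?_, fun x hx => le_antisymm ?_ ?_⟩
  · exact le_coe_ennreal_biInf fun ζ hζ => hKL ζ hζ.1 x (mem_uIcc.2 (.inl ⟨hζ.2, hx⟩))
  · exact (EReal.coe_ennreal_le_coe_ennreal_iff.2
      (biInf_mono fun ζ hζ => ⟨hζ.1, hζ.2.le⟩)).trans (hattained x)
  · exact le_coe_ennreal_biInf fun ζ hζ => hKL ζ hζ.1 x (mem_uIcc.2 (.inr ⟨hx, hζ.2⟩))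
  · exact (EReal.coe_ennreal_le_coe_ennreal_iff.2
      (biInf_mono fun ζ hζ => ⟨hζ.1, hζ.2.ge⟩)).trans (hattained x)

end
end
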